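/- arXiv:1811.05482 — 5 statements merged into one kernel-verified Lean document; each statement's English description precedes it below -/
import Mathlib

section
/- Let u : H_code → H_phys be a linear isometry between complex Hilbert spaces, and let M_code, M_phys be von Neumann algebras on H_code and H_phys with commutants M_code', M_phys'. Suppose the reconstruction property holds for (u, M_code, M_phys) and for (u, M_code', M_phys'), and suppose there exists Ω ∈ H_code such that uΩ is cyclic with respect to both M_phys and M_phys'. Then for every Ψ ∈ H_code that is cyclic with respect to both M_code and M_code', the vector uΨ is cyclic with respect to both M_phys and M_phys' (hence cyclic and separating with respect to M_phys). -/
/-- A vector `ψ` is cyclic with respect to a set `M` of bounded operators if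
`{Oψ : O ∈ M}` is dense. -/
def IsCyclicVector {H : Type*} [NormedAddCommGroup H] [InnerProductSpace ℂ H]
    (M : Set (H →L[ℂ] H)) (ψ : H) : Prop :=
  Dense {x : H | ∃ O ∈ M, O ψ = x}

/-- The reconstruction property for `(u, M_code, M_phys)`: every `O ∈ M_code`
has a representative `Otilde ∈ M_phys` with `u(Oθ) = Otilde(uθ)` and `u(O†θ) = Otilde†(uθ)`
for all `θ`. -/
def Reconstruction {H₁ H₂ : Type*}
    [NormedAddCommGroup H₁] [InnerProductSpace ℂ H₁] [CompleteSpace H₁]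
    [NormedAddCommGroup H₂] [InnerProductSpace ℂ H₂] [CompleteSpace H₂]
    (u : H₁ →ₗᵢ[ℂ] H₂) (Mc : Set (H₁ →L[ℂ] H₁)) (Mp : Set (H₂ →L[ℂ] H₂)) : Prop :=
  ∀ O ∈ Mc, ∃ Otilde ∈ Mp, ∀ θ : H₁,
    u (O θ) = Otilde (u θ) ∧
    u ((ContinuousLinearMap.adjoint O) θ) = (ContinuousLinearMap.adjoint Otilde) (u θ)

/-- Transfer of cyclicity: if `B` is closed under multiplication, reconstruction
holds for `(u, A, B)`, and `uΩ` is cyclic for `B`, then the image of any vector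
cyclic for `A` is cyclic for `B`. -/
lemma cyclic_transfer {H₁ H₂ : Type*}
    [NormedAddCommGroup H₁] [InnerProductSpace ℂ H₁] [CompleteSpace H₁]
    [NormedAddCommGroup H₂] [InnerProductSpace ℂ H₂] [CompleteSpace H₂]
    (u : H₁ →ₗᵢ[ℂ] H₂) (A : Set (H₁ →L[ℂ] H₁)) (B : Set (H₂ →L[ℂ] H₂))
    (hmul : ∀ a ∈ B, ∀ b ∈ B, a * b ∈ B)
    (hrec : Reconstruction u A B) (Ω : H₁)
    (hΩ : IsCyclicVector B (u Ω)) (Ψ : H₁) (hΨ : IsCyclicVector A Ψ) :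
    IsCyclicVector B (u Ψ) := by
  rw [IsCyclicVector, Metric.dense_iff] at *
  intro x ε hε
  obtain ⟨y, hyb, a, ha, hay⟩ := hΩ x (ε / 2) (by positivity)
  have hδ : (0:ℝ) < ε / (2 * (‖a‖ + 1)) := by positivity
  obtain ⟨z, hzb, O, hO, hOz⟩ := hΨ Ω _ hδ
  obtain ⟨Ot, hOt, hcomm⟩ := hrec O hO
  refine ⟨(a * Ot) (u Ψ), ?_, a * Ot, hmul a ha Ot hOt, rfl⟩
  have h1 : (a * Ot) (u Ψ) = a (u (O Ψ)) := by
    simp [ContinuousLinearMap.mul_apply, (hcomm Ψ).1]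
  rw [Metric.mem_ball, h1]
  have hd1 : dist x (a (u Ω)) < ε / 2 := by
    rw [← hay] at hyb; exact Metric.mem_ball'.mp hyb
  have hd2 : dist (a (u Ω)) (a (u (O Ψ))) ≤ ‖a‖ * dist Ω (O Ψ) := by
    rw [dist_eq_norm, ← map_sub a, dist_eq_norm]
    calc ‖a (u Ω - u (O Ψ))‖ ≤ ‖a‖ * ‖u Ω - u (O Ψ)‖ := a.le_opNorm _
      _ = ‖a‖ * ‖Ω - O Ψ‖ := by rw [← map_sub u, u.norm_map]
  have hd3 : ‖a‖ * dist Ω (O Ψ) < ε / 2 := by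
    have hz : dist Ω (O Ψ) < ε / (2 * (‖a‖ + 1)) := by
      rw [← hOz] at hzb; exact Metric.mem_ball'.mp hzb
    calc ‖a‖ * dist Ω (O Ψ) ≤ (‖a‖ + 1) * dist Ω (O Ψ) := by
          apply mul_le_mul_of_nonneg_right (by linarith) dist_nonneg
      _ < (‖a‖ + 1) * (ε / (2 * (‖a‖ + 1))) := by
          apply mul_lt_mul_of_pos_left hz (by positivity)
      _ = ε / 2 := by field_simp
  calc dist (a (u (O Ψ))) x ≤ dist (a (u (O Ψ))) (a (u Ω)) + dist (a (u Ω)) x :=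
        dist_triangle _ _ _
    _ = dist (a (u Ω)) (a (u (O Ψ))) + dist x (a (u Ω)) := by
        rw [dist_comm, dist_comm (a (u Ω)) x]
    _ < ε / 2 + ε / 2 := by
        have := lt_of_le_of_lt hd2 hd3; linarith
    _ = ε := by ring

/-- under reconstruction for both the algebras and their commutants,
and the existence of `Ω` with `uΩ` cyclic for `M_phys` and `M_phys'`, the image
under `u` of any vector cyclic with respect to both `M_code` and `M_code'` is
cyclic with respect to both `M_phys` and `M_phys'`. -/
theorem cyclic_separating_mapsto {H₁ H₂ : Type*}
    [NormedAddCommGroup H₁] [InnerProductSpace ℂ H₁] [CompleteSpace H₁]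
    [NormedAddCommGroup H₂] [InnerProductSpace ℂ H₂] [CompleteSpace H₂]
    (u : H₁ →ₗᵢ[ℂ] H₂) (Mc : VonNeumannAlgebra H₁) (Mp : VonNeumannAlgebra H₂)
    (hrec : Reconstruction u (Mc : Set (H₁ →L[ℂ] H₁)) (Mp : Set (H₂ →L[ℂ] H₂)))
    (hrec' : Reconstruction u (Mc.commutant : Set (H₁ →L[ℂ] H₁))
      (Mp.commutant : Set (H₂ →L[ℂ] H₂)))
    (hΩ : ∃ Ω : H₁, IsCyclicVector (Mp : Set (H₂ →L[ℂ] H₂)) (u Ω) ∧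
      IsCyclicVector (Mp.commutant : Set (H₂ →L[ℂ] H₂)) (u Ω)) :
    ∀ Ψ : H₁, IsCyclicVector (Mc : Set (H₁ →L[ℂ] H₁)) Ψ →
      IsCyclicVector (Mc.commutant : Set (H₁ →L[ℂ] H₁)) Ψ →
      IsCyclicVector (Mp : Set (H₂ →L[ℂ] H₂)) (u Ψ) ∧
      IsCyclicVector (Mp.commutant : Set (H₂ →L[ℂ] H₂)) (u Ψ) := by
  obtain ⟨Ω, hΩ1, hΩ2⟩ := hΩ
  intro Ψ hΨ1 hΨ2
  constructor
  · exact cyclic_transfer u _ _ (fun a ha b hb => Mp.mul_mem ha hb) hrec Ω hΩ1 Ψ hΨ1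
  · exact cyclic_transfer u _ _ (fun a ha b hb => Mp.commutant.mul_mem ha hb) hrec' Ω hΩ2 Ψ hΨ2
end

section
/- Let u : H_code → H_phys be a linear isometry between complex Hilbert spaces, let M_code, M_phys be von Neumann algebras on H_code, H_phys, and let Ψ, Φ ∈ H_code with uΨ cyclic with respect to M_phys. Let S_c : H_code → H_code be a continuous conjugate-linear map satisfying S_c(OΨ) = O†Φ for all O ∈ M_code, and let S_p : H_phys → H_phys be a continuous conjugate-linear map satisfying S_p(P(uΨ)) = P†(uΦ) for all P ∈ M_phys. If u†Pu ∈ M_code for every P ∈ M_phys, then u†(S_p y) = S_c(u† y) for all y ∈ H_phys, where u† is the Hilbert-space adjoint of u. -/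
/-- if `uΨ` is cyclic for `M_phys` and all compressions `u†Pu`
of operators `P ∈ M_phys` lie in `M_code`, then the adjoint of the isometry
intertwines the physical and code relative Tomita operators:
`u† ∘ S_p = S_c ∘ u†`. -/
theorem adjoint_tomita_intertwines {H₁ H₂ : Type*}
    [NormedAddCommGroup H₁] [InnerProductSpace ℂ H₁] [CompleteSpace H₁]
    [NormedAddCommGroup H₂] [InnerProductSpace ℂ H₂] [CompleteSpace H₂]
    (u : H₁ →ₗᵢ[ℂ] H₂) (Mc : VonNeumannAlgebra H₁) (Mp : VonNeumannAlgebra H₂)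
    (Ψ Φ : H₁) (hΨ : IsCyclicVector (Mp : Set (H₂ →L[ℂ] H₂)) (u Ψ))
    (Sc : H₁ →L⋆[ℂ] H₁) (Sp : H₂ →L⋆[ℂ] H₂)
    (hSc : ∀ O ∈ Mc, Sc (O Ψ) = (ContinuousLinearMap.adjoint O) Φ)
    (hSp : ∀ P ∈ Mp, Sp (P (u Ψ)) = (ContinuousLinearMap.adjoint P) (u Φ))
    (hcomp : ∀ P ∈ Mp,
      (ContinuousLinearMap.adjoint u.toContinuousLinearMap) ∘L P ∘L
        u.toContinuousLinearMap ∈ Mc) :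
    ∀ y : H₂, (ContinuousLinearMap.adjoint u.toContinuousLinearMap) (Sp y) =
      Sc ((ContinuousLinearMap.adjoint u.toContinuousLinearMap) y) := by
  set ud := ContinuousLinearMap.adjoint u.toContinuousLinearMap with hud
  have huu : ∀ x : H₁, ud (u x) = x := by
    intro x
    apply ext_inner_right ℂ
    intro z
    rw [hud, ContinuousLinearMap.adjoint_inner_left]
    simp [u.inner_map_map x z]
  have key : Set.EqOn (fun y : H₂ => ud (Sp y)) (fun y => Sc (ud y))
      {x : H₂ | ∃ P ∈ (Mp : Set (H₂ →L[ℂ] H₂)), P (u Ψ) = x} := by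
    rintro y ⟨P, hP, rfl⟩
    simp only
    have h1 : ud (Sp (P (u Ψ))) = ud ((ContinuousLinearMap.adjoint P) (u Φ)) := by
      rw [hSp P hP]
    have h2 : ud (P (u Ψ)) = (ud ∘L P ∘L u.toContinuousLinearMap) Ψ := by
      simp [ContinuousLinearMap.comp_apply]
    rw [h1, h2, hSc _ (hcomp P hP)]
    simp [ContinuousLinearMap.adjoint_comp, ContinuousLinearMap.adjoint_adjoint,
      ContinuousLinearMap.comp_apply, hud]
  have hcl : Set.EqOn (fun y : H₂ => ud (Sp y)) (fun y => Sc (ud y))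
      (closure {x : H₂ | ∃ P ∈ (Mp : Set (H₂ →L[ℂ] H₂)), P (u Ψ) = x}) :=
    key.closure (by continuity) (by continuity)
  intro y
  exact hcl (hΨ y)
end

section
/- Let u : H_code → H_phys be a linear isometry between complex Hilbert spaces and let Δ be a bounded self-adjoint positive invertible operator on H_phys that maps the range of u into the range of u. Then for every Ψ ∈ H_code, ⟨Ψ, log(u†Δu)Ψ⟩ = ⟨uΨ, (log Δ)(uΨ)⟩, where log is applied via the continuous functional calculus and u† is the Hilbert-space adjoint of u. (In particular, the relative entropy computed from the compressed relative modular operator u†Δu on H_code equals the relative entropy computed from Δ on H_phys.) -/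
/-!
Because `Δ` maps the range of the isometry `u` into itself, `u ∘ (u†Δu) = Δ ∘ u`. Such an
intertwining relation passes to polynomials in the two operators and then, by Weierstrass
approximation on an interval `[r, M] ⊂ (0, ∞)` containing both spectra, to `log`. The spectrum
of `u†Δu` lies in `[r, M]` because the operator inequalities `r ≤ Δ ≤ M` survive conjugation by
`u`. Hence `u ∘ log (u†Δu) = log Δ ∘ u`, and the claim follows since `u` preserves inner products.
-/

open ContinuousLinearMap Set
open scoped Polynomial

lemma IsCompact.exists_subset_Icc_of_subset_Ioi {K : Set ℝ} (hK : IsCompact K) {a : ℝ}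
    (h : K ⊆ Ioi a) : ∃ r > a, ∃ M, K ⊆ Icc r M := by
  rcases K.eq_empty_or_nonempty with rfl | hne
  · exact ⟨a + 1, by linarith, a, empty_subset _⟩
  · exact ⟨sInf K, h (hK.sInf_mem hne), sSup K, hK.isBounded.subset_Icc_sInf_sSup⟩

lemma norm_cfc_sub_aeval_le {A : Type*} [CStarAlgebra A] {a : A} (ha : IsSelfAdjoint a)
    {f : ℝ → ℝ} (hf : ContinuousOn f (spectrum ℝ a)) {p : ℝ[X]} {δ : ℝ} (hδ : 0 ≤ δ)
    (hp : ∀ x ∈ spectrum ℝ a, |p.eval x - f x| ≤ δ) :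
    ‖cfc f a - Polynomial.aeval a p‖ ≤ δ := by
  rw [← cfc_polynomial p a, ← cfc_sub f p.eval a hf p.continuousOn_aeval]
  refine norm_cfc_le hδ fun x hx => ?_
  rw [Real.norm_eq_abs, abs_sub_comm]
  exact hp x hx

section Intertwining

variable {E F : Type*} [NormedAddCommGroup E] [NormedSpace ℂ E]
  [NormedAddCommGroup F] [NormedSpace ℂ F] {A : E →L[ℂ] E} {B : F →L[ℂ] F} {v : E →L[ℂ] F}

lemma comp_pow_of_comp_eq (hv : v ∘L A = B ∘L v) (n : ℕ) : v ∘L (A ^ n) = (B ^ n) ∘L v := by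
  induction n with
  | zero => simp [ContinuousLinearMap.one_def]
  | succ n ih =>
    rw [pow_succ, pow_succ, mul_def, mul_def, ← comp_assoc, ih, comp_assoc, hv, comp_assoc]

lemma comp_aeval_of_comp_eq (hv : v ∘L A = B ∘L v) (p : ℝ[X]) :
    v ∘L Polynomial.aeval A p = Polynomial.aeval B p ∘L v := by
  induction p using Polynomial.induction_on' with
  | add p q hp hq => simp only [map_add, comp_add, add_comp, hp, hq]
  | monomial n c =>
    simp only [Polynomial.aeval_monomial, Algebra.algebraMap_eq_smul_one, smul_mul_assoc, one_mul]
    rw [comp_smul, smul_comp, comp_pow_of_comp_eq hv]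

end Intertwining

lemma comp_cfc_of_comp_eq {E F : Type*}
    [NormedAddCommGroup E] [InnerProductSpace ℂ E] [CompleteSpace E]
    [NormedAddCommGroup F] [InnerProductSpace ℂ F] [CompleteSpace F]
    {A : E →L[ℂ] E} {B : F →L[ℂ] F} {v : E →L[ℂ] F}
    (hA : IsSelfAdjoint A) (hB : IsSelfAdjoint B) (hv : v ∘L A = B ∘L v)
    {f : ℝ → ℝ} {a b : ℝ} (hf : ContinuousOn f (Icc a b))
    (hAab : spectrum ℝ A ⊆ Icc a b) (hBab : spectrum ℝ B ⊆ Icc a b) :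
    v ∘L cfc f A = cfc f B ∘L v := by
  refine eq_of_forall_dist_le fun ε hε => ?_
  set δ := ε / (2 * ‖v‖ + 1)
  have hδ : 0 < δ := by positivity
  obtain ⟨p, hp⟩ := exists_polynomial_near_of_continuousOn a b f hf δ hδ
  have hpA := norm_cfc_sub_aeval_le hA (hf.mono hAab) hδ.le fun x hx => (hp x (hAab hx)).le
  have hpB := norm_cfc_sub_aeval_le hB (hf.mono hBab) hδ.le fun x hx => (hp x (hBab hx)).le
  calc dist (v ∘L cfc f A) (cfc f B ∘L v)
      = ‖v ∘L (cfc f A - Polynomial.aeval A p) - (cfc f B - Polynomial.aeval B p) ∘L v‖ := by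
        rw [dist_eq_norm, comp_sub, sub_comp, comp_aeval_of_comp_eq hv]; abel_nf
    _ ≤ ‖v‖ * δ + δ * ‖v‖ :=
        (norm_sub_le _ _).trans <| add_le_add
          ((opNorm_comp_le _ _).trans (by gcongr))
          ((opNorm_comp_le _ _).trans (by gcongr))
    _ = 2 * ‖v‖ / (2 * ‖v‖ + 1) * ε := by ring
    _ ≤ ε := mul_le_of_le_one_left hε.le ((div_le_one (by positivity)).mpr (by linarith))

namespace LinearIsometry

variable {H₁ H₂ : Type*}
  [NormedAddCommGroup H₁] [InnerProductSpace ℂ H₁] [CompleteSpace H₁]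
  [NormedAddCommGroup H₂] [InnerProductSpace ℂ H₂] [CompleteSpace H₂]
  (u : H₁ →ₗᵢ[ℂ] H₂)

lemma comp_adjoint_comp_comp_eq_comp {Δ : H₂ →L[ℂ] H₂}
    (h : ∀ y ∈ LinearMap.range u.toLinearMap, Δ y ∈ LinearMap.range u.toLinearMap) :
    u.toContinuousLinearMap ∘L (adjoint u.toContinuousLinearMap ∘L Δ ∘L u.toContinuousLinearMap) =
      Δ ∘L u.toContinuousLinearMap := by
  ext x
  obtain ⟨y, hy⟩ := h (u x) ⟨x, rfl⟩
  have hleft : adjoint u.toContinuousLinearMap (u y) = y := congr($(u.adjoint_comp_self) y)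
  simp only [comp_apply, coe_toContinuousLinearMap]
  rw [← hy]
  exact congrArg u hleft

lemma adjoint_comp_algebraMap_comp (c : ℝ) :
    adjoint u.toContinuousLinearMap ∘L algebraMap ℝ (H₂ →L[ℂ] H₂) c ∘L u.toContinuousLinearMap =
      algebraMap ℝ (H₁ →L[ℂ] H₁) c := by
  simp only [Algebra.algebraMap_eq_smul_one, smul_comp, comp_smul, ContinuousLinearMap.one_def,
    ContinuousLinearMap.id_comp, u.adjoint_comp_self]

lemma adjoint_comp_comp_mono {A B : H₂ →L[ℂ] H₂} (h : A ≤ B) :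
    adjoint u.toContinuousLinearMap ∘L A ∘L u.toContinuousLinearMap ≤
      adjoint u.toContinuousLinearMap ∘L B ∘L u.toContinuousLinearMap := by
  rw [le_def] at h ⊢
  simpa only [comp_sub, sub_comp] using h.adjoint_conj u.toContinuousLinearMap

lemma spectrum_adjoint_comp_comp_subset_Icc {Δ : H₂ →L[ℂ] H₂} (hΔ : IsSelfAdjoint Δ) {a b : ℝ}
    (h : spectrum ℝ Δ ⊆ Icc a b) :
    spectrum ℝ (adjoint u.toContinuousLinearMap ∘L Δ ∘L u.toContinuousLinearMap) ⊆ Icc a b := by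
  have hT := hΔ.adjoint_conj u.toContinuousLinearMap
  intro x hx
  constructor
  · refine (algebraMap_le_iff_le_spectrum hT).mp ?_ x hx
    rw [← u.adjoint_comp_algebraMap_comp]
    exact u.adjoint_comp_comp_mono ((algebraMap_le_iff_le_spectrum hΔ).mpr fun y hy => (h hy).1)
  · refine (le_algebraMap_iff_spectrum_le hT).mp ?_ x hx
    rw [← u.adjoint_comp_algebraMap_comp]
    exact u.adjoint_comp_comp_mono ((le_algebraMap_iff_spectrum_le hΔ).mpr fun y hy => (h hy).2)

end LinearIsometry

/-- if `Δ` is a bounded self-adjoint positive invertible operator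
(spectrum contained in `(0,∞)`) on `H_phys` which preserves the range of the
isometry `u`, then for every `Ψ ∈ H_code`,
`⟨Ψ, log(u†Δu)Ψ⟩ = ⟨uΨ, (log Δ)(uΨ)⟩`, i.e. the relative entropies computed
from the compressed relative modular operator and from `Δ` agree. -/
theorem relative_entropy_compression {H₁ H₂ : Type*}
    [NormedAddCommGroup H₁] [InnerProductSpace ℂ H₁] [CompleteSpace H₁]
    [NormedAddCommGroup H₂] [InnerProductSpace ℂ H₂] [CompleteSpace H₂]
    (u : H₁ →ₗᵢ[ℂ] H₂) (Δ : H₂ →L[ℂ] H₂) (hΔ : IsSelfAdjoint Δ)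
    (hspec : spectrum ℝ Δ ⊆ Set.Ioi (0 : ℝ))
    (hrange : ∀ y ∈ LinearMap.range u.toLinearMap, Δ y ∈ LinearMap.range u.toLinearMap) :
    ∀ Ψ : H₁,
      (inner ℂ Ψ ((cfc Real.log
          ((ContinuousLinearMap.adjoint u.toContinuousLinearMap) ∘L Δ ∘L
            u.toContinuousLinearMap)) Ψ) : ℂ) =
        (inner ℂ (u Ψ) ((cfc Real.log Δ) (u Ψ)) : ℂ) := by
  intro Ψ
  obtain ⟨r, hr, M, hΔrM⟩ :=
    (ContinuousFunctionalCalculus.isCompact_spectrum Δ).exists_subset_Icc_of_subset_Ioi hspec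
  have hlog : ContinuousOn Real.log (Icc r M) :=
    Real.continuousOn_log.mono fun x hx => (hr.trans_le hx.1).ne'
  have hintertwine := comp_cfc_of_comp_eq (hΔ.adjoint_conj _) hΔ
    (u.comp_adjoint_comp_comp_eq_comp hrange) hlog
    (u.spectrum_adjoint_comp_comp_subset_Icc hΔ hΔrM) hΔrM
  rw [← u.inner_map_map]
  exact congrArg (inner ℂ (u Ψ)) congr($hintertwine Ψ)
end

section
/- Let u : H_code → H_phys be a linear isometry between complex Hilbert spaces, let X be a unitary operator on H_phys, and let U be a unitary operator on H_code such that u†Xu = U, where u† is the Hilbert-space adjoint of u. Then X maps the range of u into the range of u, and Xu = uU, i.e., X(ux) = u(Ux) for all x ∈ H_code. -/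
open scoped InnerProductSpace

/-- if `X` is unitary on `H_phys`, `U` is unitary on `H_code`, and
`u†Xu = U`, then `X` preserves the range of `u` and `Xu = uU`. -/
theorem unitary_compression_intertwines {H₁ H₂ : Type*}
    [NormedAddCommGroup H₁] [InnerProductSpace ℂ H₁] [CompleteSpace H₁]
    [NormedAddCommGroup H₂] [InnerProductSpace ℂ H₂] [CompleteSpace H₂]
    (u : H₁ →ₗᵢ[ℂ] H₂) (X : H₂ →L[ℂ] H₂) (U : H₁ →L[ℂ] H₁)
    (hX : X ∈ unitary (H₂ →L[ℂ] H₂)) (hU : U ∈ unitary (H₁ →L[ℂ] H₁))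
    (hcomp : (ContinuousLinearMap.adjoint u.toContinuousLinearMap) ∘L X ∘L
      u.toContinuousLinearMap = U) :
    (∀ y ∈ LinearMap.range u.toLinearMap, X y ∈ LinearMap.range u.toLinearMap) ∧
    (∀ x : H₁, X (u x) = u (U x)) := by
  have hXadj : ∀ a : H₂, (ContinuousLinearMap.adjoint X) (X a) = a := by
    have h := hX.1
    rw [ContinuousLinearMap.star_eq_adjoint] at h
    intro a
    calc (ContinuousLinearMap.adjoint X) (X a)
        = ((ContinuousLinearMap.adjoint X) * X) a := rfl
      _ = a := by rw [h]; rfl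
  have hXinner : ∀ a b : H₂, ⟪X a, X b⟫_ℂ = ⟪a, b⟫_ℂ := by
    intro a b
    rw [← ContinuousLinearMap.adjoint_inner_left, hXadj]
  have hUinner : ∀ a b : H₁, ⟪U a, U b⟫_ℂ = ⟪a, b⟫_ℂ := by
    have h := hU.1
    rw [ContinuousLinearMap.star_eq_adjoint] at h
    intro a b
    rw [← ContinuousLinearMap.adjoint_inner_left]
    have : (ContinuousLinearMap.adjoint U) (U a) = a := by
      calc (ContinuousLinearMap.adjoint U) (U a)
          = ((ContinuousLinearMap.adjoint U) * U) a := rfl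
        _ = a := by rw [h]; rfl
    rw [this]
  have huadj : ∀ x : H₁,
      (ContinuousLinearMap.adjoint u.toContinuousLinearMap) (X (u x)) = U x := by
    intro x
    have := congrArg (fun f => f x) hcomp
    simpa using this
  have key : ∀ x : H₁, X (u x) = u (U x) := by
    intro x
    have hz : ⟪X (u x) - u (U x), X (u x) - u (U x)⟫_ℂ = 0 := by
      have h1 : ⟪X (u x), X (u x)⟫_ℂ = ⟪x, x⟫_ℂ := by
        rw [hXinner]; exact u.inner_map_map x x
      have h2 : ⟪X (u x), u (U x)⟫_ℂ = ⟪x, x⟫_ℂ := by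
        show ⟪X (u x), u.toContinuousLinearMap (U x)⟫_ℂ = ⟪x, x⟫_ℂ
        rw [← ContinuousLinearMap.adjoint_inner_left u.toContinuousLinearMap]
        have : (ContinuousLinearMap.adjoint u.toContinuousLinearMap) (X (u x)) = U x :=
          huadj x
        rw [this, hUinner]
      have h3 : ⟪u (U x), X (u x)⟫_ℂ = ⟪x, x⟫_ℂ := by
        rw [← inner_conj_symm, h2, ← inner_conj_symm x x]; simp
      have h4 : ⟪u (U x), u (U x)⟫_ℂ = ⟪x, x⟫_ℂ := by
        rw [u.inner_map_map, hUinner]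
      rw [inner_sub_sub_self, h1, h2, h3, h4]
      ring
    exact sub_eq_zero.mp (inner_self_eq_zero.mp hz)
  refine ⟨?_, key⟩
  rintro y ⟨x, rfl⟩
  exact ⟨U x, (key x).symm⟩
end

section
/- Let M be a von Neumann algebra on a complex Hilbert space H, let ξ, η ∈ H, and let S : H → H be a continuous conjugate-linear map satisfying S(Pξ) = P†η for all P ∈ M (in particular η = Sξ). Let Δ be a bounded linear operator on H satisfying ⟨Δx, y⟩ = ⟨Sy, Sx⟩ for all x, y ∈ H (so Δ = S†S), and suppose Δξ = ξ. Then ⟨η, Pη⟩ = ⟨ξ, Pξ⟩ for all P ∈ M. -/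
open ContinuousLinearMap

theorem VonNeumannAlgebra.apply_eq_of_relTomita {H : Type*} [NormedAddCommGroup H]
    [InnerProductSpace ℂ H] [CompleteSpace H] {M : VonNeumannAlgebra H} {ξ η : H}
    {S : H →L⋆[ℂ] H} (hS : ∀ P ∈ M, S (P ξ) = adjoint P η) : S ξ = η := by
  simpa [adjoint_one] using hS 1 M.one_mem

/-- if `S` is a (bounded) relative Tomita operator for the pair
`(ξ, η)` with respect to `M` (so `S(Pξ) = P†η` for all `P ∈ M`), `Δ = S†S` is
its adjoint-square, and `Δξ = ξ` (vanishing relative entropy), then the states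
`η` and `ξ` agree on `M`: `⟨η, Pη⟩ = ⟨ξ, Pξ⟩` for all `P ∈ M`. -/
theorem states_agree_of_modular_fixed {H : Type*} [NormedAddCommGroup H]
    [InnerProductSpace ℂ H] [CompleteSpace H] (M : VonNeumannAlgebra H)
    (ξ η : H) (S : H →L⋆[ℂ] H)
    (hS : ∀ P ∈ M, S (P ξ) = (ContinuousLinearMap.adjoint P) η)
    (Δ : H →L[ℂ] H)
    (hΔ : ∀ x y : H, (inner ℂ (Δ x) y : ℂ) = inner ℂ (S y) (S x))
    (hfix : Δ ξ = ξ) :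
    ∀ P ∈ M, (inner ℂ η (P η) : ℂ) = inner ℂ ξ (P ξ) := by
  intro P hP
  calc (inner ℂ η (P η) : ℂ)
      = inner ℂ (adjoint P η) η := (adjoint_inner_left P η η).symm
    _ = inner ℂ (S (P ξ)) (S ξ) := by rw [hS P hP, M.apply_eq_of_relTomita hS]
    _ = inner ℂ (Δ ξ) (P ξ) := (hΔ ξ (P ξ)).symm
    _ = inner ℂ ξ (P ξ) := by rw [hfix]
end
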